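/- arXiv:0807.2702 — 10 statements merged into one kernel-verified Lean document; each statement's English description precedes it below -/
import Mathlib

section
/- Let A be a unital *-algebra containing t₁, t₂ with t_i* t_j = δ_{ij} 1 and t₁t₁* + t₂t₂* = 1. Define ζ(y) = t₁ y t₁* − t₂ y t₂*, and define a₁ = t₁ t₂*, a_n = ζ(a_{n-1}) for n ≥ 2. Then the family (a_n)_{n≥1} satisfies the canonical anticommutation relations: a_n a_m* + a_m* a_n = δ_{nm} 1 and a_n a_m + a_m a_n = 0 for all n, m ≥ 1. -/
/-- The recursive fermion system built from Cuntz `O₂` generators in a unital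
*-algebra satisfies the canonical anticommutation relations. -/
theorem recursive_fermion_system_CAR
    {A : Type*} [Ring A] [StarRing A]
    (t₁ t₂ : A)
    (h11 : star t₁ * t₁ = 1) (h22 : star t₂ * t₂ = 1)
    (h12 : star t₁ * t₂ = 0) (h21 : star t₂ * t₁ = 0)
    (hsum : t₁ * star t₁ + t₂ * star t₂ = 1)
    (a : ℕ → A)
    (ha1 : a 1 = t₁ * star t₂)
    (harec : ∀ n : ℕ, 1 ≤ n →
      a (n + 1) = t₁ * a n * star t₁ - t₂ * a n * star t₂) :
    (∀ n m : ℕ, 1 ≤ n → 1 ≤ m →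
      a n * star (a m) + star (a m) * a n = if n = m then (1 : A) else 0) ∧
    (∀ n m : ℕ, 1 ≤ n → 1 ≤ m → a n * a m + a m * a n = 0) := by
  classical
  set Z : A → A := fun y => t₁ * y * star t₁ - t₂ * y * star t₂ with hZdef
  set Φ : A → A := fun y => t₁ * y * star t₁ + t₂ * y * star t₂ with hΦdef
  have e11 : ∀ y : A, star t₁ * (t₁ * y) = y := fun y => by
    rw [← mul_assoc, h11, one_mul]
  have e22 : ∀ y : A, star t₂ * (t₂ * y) = y := fun y => by
    rw [← mul_assoc, h22, one_mul]
  have e12 : ∀ y : A, star t₁ * (t₂ * y) = 0 := fun y => by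
    rw [← mul_assoc, h12, zero_mul]
  have e21 : ∀ y : A, star t₂ * (t₁ * y) = 0 := fun y => by
    rw [← mul_assoc, h21, zero_mul]
  have hZmul : ∀ y z : A, Z y * Z z = Φ (y * z) := by
    intro y z
    simp only [hZdef, hΦdef]
    simp only [mul_sub, sub_mul, mul_assoc, e11, e22, e12, e21, mul_zero,
      sub_zero, zero_sub, sub_neg_eq_add]
  have hΦadd : ∀ y z : A, Φ y + Φ z = Φ (y + z) := by
    intro y z
    simp only [hΦdef]
    noncomm_ring
  have hZstar : ∀ y : A, star (Z y) = Z (star y) := by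
    intro y
    simp only [hZdef, star_sub, star_mul, star_star, mul_assoc]
  have hΦ1 : Φ 1 = 1 := by
    simpa only [hΦdef, mul_one] using hsum
  have hΦ0 : Φ 0 = 0 := by simp [hΦdef]
  have hsa1 : star (a 1) = t₂ * star t₁ := by
    rw [ha1, star_mul, star_star]
  have a1Z : ∀ y : A, a 1 * Z y = -(t₁ * (y * star t₂)) := by
    intro y
    simp only [ha1, hZdef, mul_sub, mul_assoc, e21, e22, mul_zero, zero_sub]
  have Za1 : ∀ y : A, Z y * a 1 = t₁ * (y * star t₂) := by
    intro y
    simp only [ha1, hZdef, sub_mul, mul_assoc, e11, e21, mul_zero, sub_zero]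
  have sa1Z : ∀ y : A, star (a 1) * Z y = t₂ * (y * star t₁) := by
    intro y
    simp only [hsa1, hZdef, mul_sub, mul_assoc, e11, e12, mul_zero, sub_zero]
  have Zsa1 : ∀ y : A, Z y * star (a 1) = -(t₂ * (y * star t₁)) := by
    intro y
    simp only [hsa1, hZdef, sub_mul, mul_assoc, e12, e22, mul_zero, zero_sub]
  have anticomm1 : ∀ y : A, a 1 * Z y + Z y * a 1 = 0 := by
    intro y; rw [a1Z, Za1, neg_add_cancel]
  have anticomm1s : ∀ y : A, star (a 1) * Z y + Z y * star (a 1) = 0 := by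
    intro y; rw [sa1Z, Zsa1, add_neg_cancel]
  have a1a1 : a 1 * star (a 1) + star (a 1) * a 1 = 1 := by
    rw [hsa1, ha1]
    calc t₁ * star t₂ * (t₂ * star t₁) + t₂ * star t₁ * (t₁ * star t₂)
        = t₁ * (star t₂ * (t₂ * star t₁)) + t₂ * (star t₁ * (t₁ * star t₂)) := by
          rw [mul_assoc, mul_assoc]
      _ = t₁ * star t₁ + t₂ * star t₂ := by rw [e22, e11]
      _ = 1 := hsum
  have a1sq : a 1 * a 1 = 0 := by
    rw [ha1, mul_assoc, e21, mul_zero]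

  have aZ : ∀ n : ℕ, 1 ≤ n → a (n + 1) = Z (a n) := by
    intro n hn
    rw [harec n hn]
  have main : ∀ k n m : ℕ, n + m ≤ k → 1 ≤ n → 1 ≤ m →
      (a n * star (a m) + star (a m) * a n = if n = m then (1 : A) else 0) ∧
      (a n * a m + a m * a n = 0) := by
    intro k
    induction k with
    | zero => intro n m h hn hm; omega
    | succ k ih =>
      intro n m hk hn hm
      obtain _ | n := n
      · omega
      obtain _ | m := m
      · omega
      rcases Nat.eq_zero_or_pos n with rfl | hn1
      · rcases Nat.eq_zero_or_pos m with rfl | hm1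
        · -- n = m = 1
          simp only [Nat.zero_add, if_pos rfl]
          exact ⟨a1a1, by rw [a1sq, add_zero]⟩
        · -- n = 1, m ≥ 2
          simp only [Nat.zero_add]
          have hm' : (1 : ℕ) ≠ m + 1 := by omega
          rw [if_neg hm', aZ m hm1]
          exact ⟨by rw [hZstar]; exact anticomm1 _, anticomm1 _⟩
      · rcases Nat.eq_zero_or_pos m with rfl | hm1
        · -- n ≥ 2, m = 1
          simp only [Nat.zero_add]
          have hn' : n + 1 ≠ 1 := by omega
          rw [if_neg hn', aZ n hn1]
          constructor
          · rw [add_comm]; exact anticomm1s _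
          · rw [add_comm]; exact anticomm1 _
        · -- n, m ≥ 2
          obtain ⟨ih1, ih2⟩ := ih n m (by omega) hn1 hm1
          rw [aZ n hn1, aZ m hm1, hZstar]
          constructor
          · rw [hZmul, hZmul, hΦadd, ih1]
            by_cases h : n = m
            · rw [if_pos h, if_pos (by omega : n + 1 = m + 1), hΦ1]
            · rw [if_neg h, if_neg (by omega : n + 1 ≠ m + 1), hΦ0]
          · rw [hZmul, hZmul, hΦadd, ih2, hΦ0]
  exact ⟨fun n m hn hm => (main (n + m) n m le_rfl hn hm).1,
         fun n m hn hm => (main (n + m) n m le_rfl hn hm).2⟩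
end

section
/- With t₁, t₂ satisfying the Cuntz O₂ relations, ζ(y) = t₁ y t₁* − t₂ y t₂*, a₁ = t₁t₂* and a_n = ζ(a_{n-1}), one has the commutation relations t_i a_m = (−1)^{i−1} a_{m+1} t_i and (−1)^{i−1} t_i a_m* = a_{m+1}* t_i for i = 1,2 and all m ≥ 1. -/
/-- Commutation relations between the Cuntz `O₂` generators and the recursive
fermion system: `tᵢ aₘ = (-1)^(i-1) a_{m+1} tᵢ` and `(-1)^(i-1) tᵢ aₘ* = a_{m+1}* tᵢ`. -/
theorem RFS_commutation_relations
    {A : Type*} [Ring A] [StarRing A]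
    (t₁ t₂ : A)
    (h11 : star t₁ * t₁ = 1) (h22 : star t₂ * t₂ = 1)
    (h12 : star t₁ * t₂ = 0) (h21 : star t₂ * t₁ = 0)
    (hsum : t₁ * star t₁ + t₂ * star t₂ = 1)
    (a : ℕ → A)
    (ha1 : a 1 = t₁ * star t₂)
    (harec : ∀ n : ℕ, 1 ≤ n →
      a (n + 1) = t₁ * a n * star t₁ - t₂ * a n * star t₂) :
    ∀ m : ℕ, 1 ≤ m →
      (t₁ * a m = a (m + 1) * t₁) ∧
      (t₂ * a m = - (a (m + 1) * t₂)) ∧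
      (t₁ * star (a m) = star (a (m + 1)) * t₁) ∧
      (- (t₂ * star (a m)) = star (a (m + 1)) * t₂) := by
  intro m hm
  have h := harec m hm
  have hs : star (a (m + 1)) = t₁ * star (a m) * star t₁ - t₂ * star (a m) * star t₂ := by
    rw [h, star_sub]
    simp [star_mul, star_star, mul_assoc]
  refine ⟨?_, ?_, ?_, ?_⟩
  · rw [h, sub_mul]
    simp [mul_assoc, h11, h21]
  · rw [h, sub_mul]
    simp [mul_assoc, h12, h22]
  · rw [hs, sub_mul]
    simp [mul_assoc, h11, h21]
  · rw [hs, sub_mul]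
    simp [mul_assoc, h12, h22]
end

section
/- Let t₁, t₂ be isometries on a Hilbert space H with t_i* t_j = δ_{ij} I and t₁t₁* + t₂t₂* = I, and let Ω ∈ H be a unit vector with t₁Ω = Ω. Define the recursive fermion system a₁ = t₁t₂*, a_n = ζ(a_{n-1}) with ζ(y) = t₁yt₁* − t₂yt₂*. Then t₂*Ω = 0 and a_n Ω = 0 for every n ≥ 1. -/
open ContinuousLinearMap

/-- If `t₁, t₂` are Cuntz `O₂` isometries on a Hilbert space and `Ω` is a unit
vector with `t₁ Ω = Ω`, then `t₂* Ω = 0` and all recursive fermion annihilation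
operators annihilate `Ω`. -/
theorem RFS_vacuum
    {H : Type*} [NormedAddCommGroup H] [InnerProductSpace ℂ H] [CompleteSpace H]
    (t₁ t₂ : H →L[ℂ] H)
    (h11 : adjoint t₁ * t₁ = 1) (h22 : adjoint t₂ * t₂ = 1)
    (h12 : adjoint t₁ * t₂ = 0) (h21 : adjoint t₂ * t₁ = 0)
    (hsum : t₁ * adjoint t₁ + t₂ * adjoint t₂ = 1)
    (Ω : H) (hΩ : ‖Ω‖ = 1) (hfix : t₁ Ω = Ω)
    (a : ℕ → H →L[ℂ] H)
    (ha1 : a 1 = t₁ * adjoint t₂)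
    (harec : ∀ n : ℕ, 1 ≤ n →
      a (n + 1) = t₁ * a n * adjoint t₁ - t₂ * a n * adjoint t₂) :
    adjoint t₂ Ω = 0 ∧ ∀ n : ℕ, 1 ≤ n → a n Ω = 0 := by
  have h2 : adjoint t₂ Ω = 0 := by
    have := congrFun (congrArg DFunLike.coe h21) Ω
    simpa [mul_apply, hfix] using this
  have h1 : adjoint t₁ Ω = Ω := by
    have := congrFun (congrArg DFunLike.coe h11) Ω
    simpa [mul_apply, hfix] using this
  refine ⟨h2, ?_⟩
  intro n hn
  induction n with
  | zero => omega
  | succ m ih =>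
    rcases Nat.eq_or_lt_of_le hn with h | h
    · have hm0 : m = 0 := by omega
      subst hm0
      simp [ha1, mul_apply, h2]
    · have hm : 1 ≤ m := by omega
      rw [harec m hm]
      simp [mul_apply, sub_apply, h1, h2, ih hm]
end

section
/- Let t₁, t₂ satisfy the Cuntz O₂ relations in a unital *-algebra, and let (a_n) be the recursive fermion system a₁ = t₁t₂*, a_n = ζ(a_{n-1}) with ζ(y) = t₁yt₁* − t₂yt₂*. For n, m ≥ 1 define A_{n,m} = a_{n+1}* a_{n+2}* ⋯ a_{n+m}*. Then the operator identity t₁^n t₂^m = A_{n,m} t₁^{n+m} holds. -/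
/-- With `A_{n,m} = a_{n+1}* a_{n+2}* ⋯ a_{n+m}*` a block of fermion creation
operators from the recursive fermion system, one has `t₁^n t₂^m = A_{n,m} t₁^{n+m}`. -/
theorem cuntz_word_as_fermion_block
    {A : Type*} [Ring A] [StarRing A]
    (t₁ t₂ : A)
    (h11 : star t₁ * t₁ = 1) (h22 : star t₂ * t₂ = 1)
    (h12 : star t₁ * t₂ = 0) (h21 : star t₂ * t₁ = 0)
    (hsum : t₁ * star t₁ + t₂ * star t₂ = 1)
    (a : ℕ → A)
    (ha1 : a 1 = t₁ * star t₂)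
    (harec : ∀ n : ℕ, 1 ≤ n →
      a (n + 1) = t₁ * a n * star t₁ - t₂ * a n * star t₂) :
    ∀ n m : ℕ, 1 ≤ n → 1 ≤ m →
      t₁ ^ n * t₂ ^ m =
        (List.ofFn fun i : Fin m => star (a (n + 1 + i.val))).prod * t₁ ^ (n + m) := by
  have H11 : ∀ x : A, star t₁ * (t₁ * x) = x := fun x => by
    rw [← mul_assoc, h11, one_mul]
  have H21 : ∀ x : A, star t₂ * (t₁ * x) = 0 := fun x => by
    rw [← mul_assoc, h21, zero_mul]
  -- key lemma: star (a (n+1)) * t₁^(n+1) = t₁^n * t₂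
  have key : ∀ n : ℕ, 1 ≤ n → star (a (n + 1)) * t₁ ^ (n + 1) = t₁ ^ n * t₂ := by
    intro n hn
    induction n, hn using Nat.le_induction with
    | base =>
      rw [harec 1 le_rfl, ha1]
      simp only [star_sub, star_mul, star_star, sub_mul, pow_succ, pow_one, mul_assoc]
      simp [H11, H21, h11, h21]
    | succ n hn ih =>
      rw [harec (n + 1) (by omega)]
      simp only [star_sub, star_mul, star_star, sub_mul, mul_assoc]
      rw [show (n + 1 + 1) = (n + 1) + 1 from rfl, pow_succ' t₁ (n + 1)]
      simp only [H11, H21, mul_zero, sub_zero]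
      rw [ih, pow_succ' t₁ n, mul_assoc]
  intro n m hn hm
  induction m, hm using Nat.le_induction generalizing n with
  | base =>
    simp only [List.ofFn_succ, List.ofFn_zero, List.prod_cons, List.prod_nil, mul_one, pow_one,
      Fin.val_zero, Nat.add_zero]
    rw [key n hn]
  | succ m hm ih =>
    have step : t₁ ^ n * t₂ ^ (m + 1) = star (a (n + 1)) * (t₁ ^ (n + 1) * t₂ ^ m) := by
      rw [← mul_assoc, key n hn, mul_assoc, ← pow_succ']
    rw [step, ih (n + 1) (by omega)]
    rw [List.ofFn_succ, List.prod_cons]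
    have hfun : (fun i : Fin m => star (a (n + 1 + (Fin.succ i).val)))
        = fun i : Fin m => star (a (n + 1 + 1 + i.val)) := by
      funext i
      have : n + 1 + (Fin.succ i).val = n + 1 + 1 + i.val := by rw [Fin.val_succ]; omega
      rw [this]
    rw [hfun, show n + 1 + m = n + (m + 1) by omega, Fin.val_zero, Nat.add_zero, mul_assoc]
end

section
/- Let π be the representation of O₂ on l²(ℕ) given by π(t_i)e_n = e_{2(n-1)+i}, and let (a_m) be the recursive fermion system built from π(t₁), π(t₂). Then for every m ≥ 1: a_m* e₁ = e_{2^{m−1}+1} and a_m e₁ = 0. -/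
/-!
`T₁` and `T₂` map the basis injectively onto `{e_{2n-1}}` and `{e_{2n}}`, so the vacuum
`e₁ = T₁ e₁` is fixed by `T₁*` and killed by `T₂*`. Applied to the vacuum, the recursion
`aₘ₊₁ = T₁ aₘ T₁* - T₂ aₘ T₂*` loses its second term, so `aₘ₊₁ e₁ = T₁ (aₘ e₁)` and
`aₘ₊₁* e₁ = T₁ (aₘ* e₁)`. Starting from `a₁ e₁ = 0` and `a₁* e₁ = T₂ e₁ = e₂`, this gives
`aₘ e₁ = 0` and `aₘ* e₁ = T₁^(m-1) e₂ = e_{2^(m-1)+1}`.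
-/

open ContinuousLinearMap

/-- The standard orthonormal basis of `l²(ℕ)`, indexed by the positive integers. -/
noncomputable def stdBasis (n : ℕ) : lp (fun _ : ℕ => ℂ) 2 :=
  lp.single 2 (n - 1) 1

open Function

namespace HilbertBasis

variable {ι κ 𝕜 E F : Type*} [RCLike 𝕜]
  [NormedAddCommGroup E] [InnerProductSpace 𝕜 E] [CompleteSpace E]
  [NormedAddCommGroup F] [InnerProductSpace 𝕜 F] [CompleteSpace F]
  (b : HilbertBasis ι 𝕜 E) (c : HilbertBasis κ 𝕜 F) {T : E →L[𝕜] F} {f : ι → κ}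

theorem adjoint_apply_eq_of_apply_eq (hT : ∀ i, T (b i) = c (f i)) {x : F} {y : E}
    (h : ∀ i, inner 𝕜 (c (f i)) x = inner 𝕜 (b i) y) : adjoint T x = y :=
  b.repr.injective <| lp.ext <| funext fun i => by
    rw [b.repr_apply_apply, b.repr_apply_apply, adjoint_inner_right, hT, h]

theorem adjoint_apply_map (hf : Injective f) (hT : ∀ i, T (b i) = c (f i)) (i : ι) :
    adjoint T (c (f i)) = b i := by
  classical
  refine b.adjoint_apply_eq_of_apply_eq c hT fun k => ?_
  rw [orthonormal_iff_ite.mp c.orthonormal, orthonormal_iff_ite.mp b.orthonormal, hf.eq_iff]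

theorem adjoint_apply_of_notMem_range (hT : ∀ i, T (b i) = c (f i)) {j : κ}
    (hj : j ∉ Set.range f) : adjoint T (c j) = 0 := by
  classical
  refine b.adjoint_apply_eq_of_apply_eq c hT fun k => ?_
  rw [orthonormal_iff_ite.mp c.orthonormal, inner_zero_right, if_neg fun h => hj ⟨k, h⟩]

end HilbertBasis

section RecursiveFermionSystem

variable {𝕜 H : Type*} [RCLike 𝕜] [NormedAddCommGroup H] [InnerProductSpace 𝕜 H] [CompleteSpace H]
  {T₁ T₂ : H →L[𝕜] H} {a : ℕ → H →L[𝕜] H} {Ω : H}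

theorem recursiveFermion_apply_vacuum (h₁ : adjoint T₁ Ω = Ω) (h₂ : adjoint T₂ Ω = 0)
    (ha1 : a 1 = T₁ * adjoint T₂)
    (harec : ∀ n, 1 ≤ n → a (n + 1) = T₁ * a n * adjoint T₁ - T₂ * a n * adjoint T₂)
    (m : ℕ) : a (m + 1) Ω = 0 := by
  induction m with
  | zero => simp [ha1, h₂]
  | succ n ih => simp [harec (n + 1) n.succ_pos, h₁, h₂, ih]

theorem adjoint_recursiveFermion_apply_vacuum (h₁ : adjoint T₁ Ω = Ω) (h₂ : adjoint T₂ Ω = 0)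
    (ha1 : a 1 = T₁ * adjoint T₂)
    (harec : ∀ n, 1 ≤ n → a (n + 1) = T₁ * a n * adjoint T₁ - T₂ * a n * adjoint T₂)
    (m : ℕ) : adjoint (a (m + 1)) Ω = (T₁ ^ m) (T₂ Ω) := by
  induction m with
  | zero => simp [ha1, mul_def, h₁]
  | succ n ih =>
    rw [pow_succ', mul_def, ContinuousLinearMap.comp_apply, ← ih]
    simp [harec (n + 1) n.succ_pos, mul_def, h₁, h₂]

end RecursiveFermionSystem

theorem stdBasis_succ (k : ℕ) :
    stdBasis (k + 1) = (default : HilbertBasis ℕ ℂ (lp (fun _ : ℕ => ℂ) 2)) k := by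
  classical
  rw [stdBasis, Nat.add_sub_cancel]
  exact (default : HilbertBasis ℕ ℂ (lp (fun _ : ℕ => ℂ) 2)).repr_symm_single k

/-- In the permutative representation `π(tᵢ) eₙ = e_{2(n-1)+i}` of `O₂` on `l²(ℕ)`,
the recursive fermion system satisfies `aₘ* e₁ = e_{2^{m-1}+1}` and `aₘ e₁ = 0`. -/
theorem RFS_one_particle_states_on_l2
    (T₁ T₂ : lp (fun _ : ℕ => ℂ) 2 →L[ℂ] lp (fun _ : ℕ => ℂ) 2)
    (hT₁ : ∀ n : ℕ, 1 ≤ n → T₁ (stdBasis n) = stdBasis (2 * (n - 1) + 1))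
    (hT₂ : ∀ n : ℕ, 1 ≤ n → T₂ (stdBasis n) = stdBasis (2 * (n - 1) + 2))
    (a : ℕ → lp (fun _ : ℕ => ℂ) 2 →L[ℂ] lp (fun _ : ℕ => ℂ) 2)
    (ha1 : a 1 = T₁ * adjoint T₂)
    (harec : ∀ n : ℕ, 1 ≤ n →
      a (n + 1) = T₁ * a n * adjoint T₁ - T₂ * a n * adjoint T₂) :
    ∀ m : ℕ, 1 ≤ m →
      adjoint (a m) (stdBasis 1) = stdBasis (2 ^ (m - 1) + 1) ∧
      a m (stdBasis 1) = 0 := by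
  obtain ⟨b, hb⟩ : ∃ b : HilbertBasis ℕ ℂ (lp (fun _ : ℕ => ℂ) 2),
      ∀ k, stdBasis (k + 1) = b k := ⟨default, stdBasis_succ⟩
  have h₁ : ∀ k, T₁ (b k) = b (2 * k) := fun k => by
    simpa [hb] using hT₁ (k + 1) k.succ_pos
  have h₂ : ∀ k, T₂ (b k) = b (2 * k + 1) := fun k => by
    simpa [hb] using hT₂ (k + 1) k.succ_pos
  have hΩ₁ : adjoint T₁ (b 0) = b 0 := by
    simpa using b.adjoint_apply_map b (mul_right_injective₀ two_ne_zero) h₁ 0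
  have hΩ₂ : adjoint T₂ (b 0) = 0 := b.adjoint_apply_of_notMem_range b h₂ (by simp)
  have hpow : ∀ j k, (T₁ ^ j) (b k) = b (2 ^ j * k) := fun j k => by
    have := (Semiconj.iterate_right (f := b) (fun k => (h₁ k).symm) j).eq k
    rwa [mul_left_iterate, ← FunLike.coe_pow_eq_iterate, eq_comm] at this
  intro m hm
  obtain ⟨m, rfl⟩ := Nat.exists_eq_add_of_le' hm
  rw [Nat.add_sub_cancel, hb, hb, adjoint_recursiveFermion_apply_vacuum hΩ₁ hΩ₂ ha1 harec, h₂,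
    hpow, mul_zero, zero_add, mul_one]
  exact ⟨rfl, recursiveFermion_apply_vacuum hΩ₁ hΩ₂ ha1 harec m⟩
end

section
/- Let t₁, t₂ be isometries on a Hilbert space with the Cuntz O₂ relations, let p ≥ 2, and let Ω satisfy t₂^{p−1}t₁Ω = Ω. Let (a_n) be the recursive fermion system a₁ = t₁t₂*, a_n = ζ(a_{n−1}). Then for every l ≥ 1: a_{pl}* Ω = (−1)^{(p−1)l} (t₂^{p−1}t₁)^{l−1} t₂^{p} Ω, and a_{p(l−1)+i}* Ω = 0 for every i with 1 ≤ i ≤ p−1. -/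
/-!
Write `ζ(y) = s₁ y s₁* - s₂ y s₂*`, so that the creation operators are `a_{n+1}* = ζⁿ(s₂ s₁*)`.
The Cuntz relations give `ζ(y) s₁ = s₁ y` and `ζ(y) s₂ = -s₂ y`, hence for `X = s₂^q s₁` the
operator identity `ζ^{q+1}(y) X = (-1)^q X y`: the shift by one period `p = q + 1` intertwines
with `X`. Applied to the fixed vector `Ω = XΩ` this reduces everything to the first period,
where `ζⁱ(s₂ s₁*) X = (-1)ⁱ s₂^{i+1} s₁* s₂^{q-i} s₁` vanishes for `i < q` because `s₁* s₂ = 0`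
and equals `(-1)^q s₂^{q+1}` for `i = q`.
-/

open ContinuousLinearMap

section RecursiveFermionSystem

variable {R : Type*} [Ring R] [StarRing R] {s₁ s₂ : R}

variable (s₁ s₂) in
/-- The map `ζ` generating a recursive fermion system. -/
def rfsShift (y : R) : R := s₁ * y * star s₁ - s₂ * y * star s₂

theorem star_iterate_rfsShift (n : ℕ) (y : R) :
    star ((rfsShift s₁ s₂)^[n] y) = (rfsShift s₁ s₂)^[n] (star y) := by
  refine Function.Semiconj.iterate_right (fun z => ?_) n y
  simp only [rfsShift, star_sub, star_mul, star_star, mul_assoc]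

theorem eq_iterate_rfsShift {a : ℕ → R}
    (harec : ∀ n : ℕ, 1 ≤ n → a (n + 1) = rfsShift s₁ s₂ (a n)) (n : ℕ) :
    a (n + 1) = (rfsShift s₁ s₂)^[n] (a 1) := by
  induction n with
  | zero => rfl
  | succ n ih => rw [harec (n + 1) (Nat.le_add_left 1 n), ih, Function.iterate_succ_apply']

theorem rfsShift_mul_fst (h11 : star s₁ * s₁ = 1) (h21 : star s₂ * s₁ = 0) (y : R) :
    rfsShift s₁ s₂ y * s₁ = s₁ * y := by
  simp only [rfsShift, sub_mul, mul_assoc, h11, h21, mul_one, mul_zero, sub_zero]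

theorem rfsShift_mul_snd (h12 : star s₁ * s₂ = 0) (h22 : star s₂ * s₂ = 1) (y : R) :
    rfsShift s₁ s₂ y * s₂ = -(s₂ * y) := by
  simp only [rfsShift, sub_mul, mul_assoc, h12, h22, mul_one, mul_zero, zero_sub]

theorem iterate_rfsShift_mul_snd_pow (h12 : star s₁ * s₂ = 0) (h22 : star s₂ * s₂ = 1)
    (m : ℕ) (y : R) :
    (rfsShift s₁ s₂)^[m] y * s₂ ^ m = (-1 : ℤ) ^ m • (s₂ ^ m * y) := by
  induction m generalizing y with
  | zero => simp
  | succ m ih =>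
    rw [Function.iterate_succ_apply, pow_succ, ← mul_assoc, ih, smul_mul_assoc, mul_assoc,
      rfsShift_mul_snd h12 h22, pow_succ, mul_neg, mul_neg_one, neg_smul, smul_neg, mul_assoc]

theorem iterate_rfsShift_mul_gp (h11 : star s₁ * s₁ = 1) (h12 : star s₁ * s₂ = 0)
    (h21 : star s₂ * s₁ = 0) (h22 : star s₂ * s₂ = 1) (q : ℕ) (y : R) :
    (rfsShift s₁ s₂)^[q + 1] y * (s₂ ^ q * s₁) = (-1 : ℤ) ^ q • (s₂ ^ q * s₁ * y) := by
  rw [Function.iterate_succ_apply, ← mul_assoc, iterate_rfsShift_mul_snd_pow h12 h22,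
    smul_mul_assoc, mul_assoc, rfsShift_mul_fst h11 h21, mul_assoc]

theorem iterate_rfsShift_add_mul_gp_pow_succ (h11 : star s₁ * s₁ = 1)
    (h12 : star s₁ * s₂ = 0) (h21 : star s₂ * s₁ = 0) (h22 : star s₂ * s₂ = 1)
    (q k i : ℕ) (y : R) :
    (rfsShift s₁ s₂)^[(q + 1) * k + i] y * (s₂ ^ q * s₁) ^ (k + 1) =
      (-1 : ℤ) ^ (q * k) • ((s₂ ^ q * s₁) ^ k * ((rfsShift s₁ s₂)^[i] y * (s₂ ^ q * s₁))) := by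
  induction k with
  | zero => simp
  | succ k ih =>
    rw [show (q + 1) * (k + 1) + i = (q + 1) + ((q + 1) * k + i) by ring,
      Function.iterate_add_apply, pow_succ', ← mul_assoc,
      iterate_rfsShift_mul_gp h11 h12 h21 h22, smul_mul_assoc, mul_assoc, ih, mul_smul_comm,
      smul_smul, ← pow_add, ← mul_assoc, ← pow_succ', mul_add_one, add_comm (q * k)]

theorem iterate_rfsShift_mul_gp_of_lt (h12 : star s₁ * s₂ = 0) (h22 : star s₂ * s₂ = 1)
    {q i : ℕ} (hi : i < q) :
    (rfsShift s₁ s₂)^[i] (s₂ * star s₁) * (s₂ ^ q * s₁) = 0 := by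
  obtain ⟨r, rfl⟩ := Nat.exists_eq_add_of_lt hi
  have h12' (z : R) : star s₁ * (s₂ * z) = 0 := by rw [← mul_assoc, h12, zero_mul]
  rw [add_assoc, pow_add, pow_succ', mul_assoc, ← mul_assoc,
    iterate_rfsShift_mul_snd_pow h12 h22, smul_mul_assoc]
  simp only [mul_assoc, h12', mul_zero, smul_zero]

theorem iterate_rfsShift_mul_gp_self (h11 : star s₁ * s₁ = 1) (h12 : star s₁ * s₂ = 0)
    (h22 : star s₂ * s₂ = 1) (q : ℕ) :
    (rfsShift s₁ s₂)^[q] (s₂ * star s₁) * (s₂ ^ q * s₁) = (-1 : ℤ) ^ q • s₂ ^ (q + 1) := by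
  rw [← mul_assoc, iterate_rfsShift_mul_snd_pow h12 h22, smul_mul_assoc, mul_assoc,
    mul_assoc, h11, mul_one, pow_succ]

end RecursiveFermionSystem

theorem RFS_creation_on_GP_vector_general
    {H : Type*} [NormedAddCommGroup H] [InnerProductSpace ℂ H] [CompleteSpace H]
    (t₁ t₂ : H →L[ℂ] H)
    (h11 : adjoint t₁ * t₁ = 1) (h22 : adjoint t₂ * t₂ = 1)
    (h12 : adjoint t₁ * t₂ = 0) (h21 : adjoint t₂ * t₁ = 0)
    (p : ℕ) (hp : 2 ≤ p)
    (Ω : H) (hfix : (t₂ ^ (p - 1) * t₁) Ω = Ω)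
    (a : ℕ → H →L[ℂ] H)
    (ha1 : a 1 = t₁ * adjoint t₂)
    (harec : ∀ n : ℕ, 1 ≤ n →
      a (n + 1) = t₁ * a n * adjoint t₁ - t₂ * a n * adjoint t₂) :
    ∀ l : ℕ, 1 ≤ l →
      (adjoint (a (p * l)) Ω =
        ((-1 : ℂ) ^ ((p - 1) * l)) • (((t₂ ^ (p - 1) * t₁) ^ (l - 1)) * t₂ ^ p) Ω) ∧
      (∀ i : ℕ, 1 ≤ i → i ≤ p - 1 → adjoint (a (p * (l - 1) + i)) Ω = 0) := by
  obtain ⟨q, rfl⟩ : ∃ q, p = q + 1 := ⟨p - 1, by omega⟩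
  simp only [← star_eq_adjoint, Nat.add_sub_cancel] at h11 h12 h21 h22 hfix ha1 harec ⊢
  have hcreation (n : ℕ) : star (a (n + 1)) = (rfsShift t₁ t₂)^[n] (t₂ * star t₁) := by
    rw [eq_iterate_rfsShift harec, star_iterate_rfsShift, ha1, star_mul, star_star]
  have hperiod (k i : ℕ) : star (a ((q + 1) * k + i + 1)) Ω =
      ((-1 : ℤ) ^ (q * k) •
        ((t₂ ^ q * t₁) ^ k * ((rfsShift t₁ t₂)^[i] (t₂ * star t₁) * (t₂ ^ q * t₁)))) Ω := by
    have hΩ : ((t₂ ^ q * t₁) ^ (k + 1)) Ω = Ω := by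
      rw [FunLike.coe_pow_eq_iterate]
      exact Function.iterate_fixed hfix (k + 1)
    nth_rw 1 [← hΩ]
    rw [← mul_apply_eq_comp, hcreation, iterate_rfsShift_add_mul_gp_pow_succ h11 h12 h21 h22]
  intro l hl
  obtain ⟨k, rfl⟩ : ∃ k, l = k + 1 := ⟨l - 1, by omega⟩
  refine ⟨?_, fun i hi₁ hi₂ => ?_⟩
  · rw [show (q + 1) * (k + 1) = (q + 1) * k + q + 1 by ring, hperiod,
      iterate_rfsShift_mul_gp_self h11 h12 h22, mul_smul_comm, smul_smul, ← pow_add,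
      smul_apply, ← Int.cast_smul_eq_zsmul ℂ, Int.cast_pow, Int.cast_neg, Int.cast_one,
      Nat.add_sub_cancel, mul_add_one, add_comm (q * k), mul_apply_eq_comp]
  · obtain ⟨j, rfl⟩ : ∃ j, i = j + 1 := ⟨i - 1, by omega⟩
    rw [Nat.add_sub_cancel, ← add_assoc, hperiod, iterate_rfsShift_mul_gp_of_lt h12 h22 hi₂,
      mul_zero, smul_zero, zero_apply]

/-- Action of the fermion creation operators of the recursive fermion system on
the GP vector `Ω` of the permutative representation `P₂(2^{p-1}1)`:
`a_{pl}* Ω = (-1)^{(p-1)l} (t₂^{p-1}t₁)^{l-1} t₂^p Ω` and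
`a_{p(l-1)+i}* Ω = 0` for `1 ≤ i ≤ p-1`. -/
theorem RFS_creation_on_GP_vector
    {H : Type*} [NormedAddCommGroup H] [InnerProductSpace ℂ H] [CompleteSpace H]
    (t₁ t₂ : H →L[ℂ] H)
    (h11 : adjoint t₁ * t₁ = 1) (h22 : adjoint t₂ * t₂ = 1)
    (h12 : adjoint t₁ * t₂ = 0) (h21 : adjoint t₂ * t₁ = 0)
    (hsum : t₁ * adjoint t₁ + t₂ * adjoint t₂ = 1)
    (p : ℕ) (hp : 2 ≤ p)
    (Ω : H) (hfix : (t₂ ^ (p - 1) * t₁) Ω = Ω)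
    (a : ℕ → H →L[ℂ] H)
    (ha1 : a 1 = t₁ * adjoint t₂)
    (harec : ∀ n : ℕ, 1 ≤ n →
      a (n + 1) = t₁ * a n * adjoint t₁ - t₂ * a n * adjoint t₂) :
    ∀ l : ℕ, 1 ≤ l →
      (adjoint (a (p * l)) Ω =
        ((-1 : ℂ) ^ ((p - 1) * l)) • (((t₂ ^ (p - 1) * t₁) ^ (l - 1)) * t₂ ^ p) Ω) ∧
      (∀ i : ℕ, 1 ≤ i → i ≤ p - 1 → adjoint (a (p * (l - 1) + i)) Ω = 0) :=
  RFS_creation_on_GP_vector_general t₁ t₂ h11 h22 h12 h21 p hp Ω hfix a ha1 harec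
end

section
/- Let t₁, t₂ be isometries on a Hilbert space with the Cuntz O₂ relations, let p ≥ 2, and let Ω satisfy t₂^{p−1}t₁Ω = Ω. With (a_n) the recursive fermion system, one has for all l ≥ 1: a_{pl} a_{pl}* Ω = Ω, and a_{p(l−1)+i}* a_{p(l−1)+i} Ω = Ω for 1 ≤ i ≤ p−1. -/
/-!
Write `Φ(y) = t₁ y t₁* + t₂ y t₂*` and `ζ(y) = t₁ y t₁* − t₂ y t₂*`. Since `t₁, t₂` are isometries
with orthogonal ranges, `ζ(x) ζ(y) = Φ(x y)`, so `a_{n+1} a_{n+1}* = Φⁿ(t₁ t₁*)` and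
`a_{n+1}* a_{n+1} = Φⁿ(t₂ t₂*)`. On the other hand `Φ(y) tᵢ = tᵢ y`, so with `w = t₂^{p-1} t₁`
we get `Φᵖ(y) Ω = Φᵖ(y) w Ω = w y Ω`: every `Φᵖ` preserves the operators fixing `Ω`. It remains
to look at `Φʲ(y)` for `j < p`, where `Φʲ(y) w = t₂ʲ y t₂^{p-1-j} t₁` equals `w` for the two
relevant `y`.
-/

section

variable {R : Type*} [Ring R] [StarRing R]

structure IsOrthogonalIsometryPair (s₁ s₂ : R) : Prop where
  star_mul₁ : star s₁ * s₁ = 1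
  star_mul₂ : star s₂ * s₂ = 1
  star_mul₁₂ : star s₁ * s₂ = 0
  star_mul₂₁ : star s₂ * s₁ = 0

def canonicalEndo (s₁ s₂ y : R) : R := s₁ * y * star s₁ + s₂ * y * star s₂

def twistedEndo (s₁ s₂ y : R) : R := s₁ * y * star s₁ - s₂ * y * star s₂

theorem star_twistedEndo (s₁ s₂ y : R) :
    star (twistedEndo s₁ s₂ y) = twistedEndo s₁ s₂ (star y) := by
  simp only [twistedEndo, star_sub, star_mul, star_star, mul_assoc]

theorem star_iterate_twistedEndo (s₁ s₂ y : R) (n : ℕ) :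
    star ((twistedEndo s₁ s₂)^[n] y) = (twistedEndo s₁ s₂)^[n] (star y) :=
  Function.Commute.iterate_right (f := star) (g := twistedEndo s₁ s₂)
    (fun _ ↦ star_twistedEndo s₁ s₂ _) n y

theorem apply_succ_eq_iterate {α : Type*} (f : α → α) {a : ℕ → α}
    (ha : ∀ n, 1 ≤ n → a (n + 1) = f (a n)) (n : ℕ) : a (n + 1) = f^[n] (a 1) := by
  induction n with
  | zero => rfl
  | succ n ih => rw [ha _ n.succ_pos, ih, Function.iterate_succ_apply']

namespace IsOrthogonalIsometryPair

variable {s₁ s₂ : R}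

theorem twistedEndo_mul (h : IsOrthogonalIsometryPair s₁ s₂) (x y : R) :
    twistedEndo s₁ s₂ x * twistedEndo s₁ s₂ y = canonicalEndo s₁ s₂ (x * y) := by
  have e₁ (z : R) : star s₁ * (s₁ * z) = z := by rw [← mul_assoc, h.star_mul₁, one_mul]
  have e₂ (z : R) : star s₂ * (s₂ * z) = z := by rw [← mul_assoc, h.star_mul₂, one_mul]
  have e₁₂ (z : R) : star s₁ * (s₂ * z) = 0 := by rw [← mul_assoc, h.star_mul₁₂, zero_mul]
  have e₂₁ (z : R) : star s₂ * (s₁ * z) = 0 := by rw [← mul_assoc, h.star_mul₂₁, zero_mul]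
  simp only [twistedEndo, canonicalEndo, sub_mul, mul_sub, mul_assoc, e₁, e₂, e₁₂, e₂₁, mul_zero]
  abel

theorem iterate_twistedEndo_mul (h : IsOrthogonalIsometryPair s₁ s₂) (n : ℕ) (x y : R) :
    (twistedEndo s₁ s₂)^[n] x * (twistedEndo s₁ s₂)^[n] y = (canonicalEndo s₁ s₂)^[n] (x * y) := by
  induction n with
  | zero => rfl
  | succ n ih =>
    simp only [Function.iterate_succ_apply', h.twistedEndo_mul, ih]

theorem iterate_twistedEndo_mul_star (h : IsOrthogonalIsometryPair s₁ s₂) (n : ℕ) :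
    (twistedEndo s₁ s₂)^[n] (s₁ * star s₂) * star ((twistedEndo s₁ s₂)^[n] (s₁ * star s₂)) =
      (canonicalEndo s₁ s₂)^[n] (s₁ * star s₁) := by
  rw [star_iterate_twistedEndo, h.iterate_twistedEndo_mul, star_mul, star_star, mul_assoc,
    ← mul_assoc (star s₂), h.star_mul₂, one_mul]

theorem star_iterate_twistedEndo_mul (h : IsOrthogonalIsometryPair s₁ s₂) (n : ℕ) :
    star ((twistedEndo s₁ s₂)^[n] (s₁ * star s₂)) * (twistedEndo s₁ s₂)^[n] (s₁ * star s₂) =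
      (canonicalEndo s₁ s₂)^[n] (s₂ * star s₂) := by
  rw [star_iterate_twistedEndo, h.iterate_twistedEndo_mul, star_mul, star_star, mul_assoc,
    ← mul_assoc (star s₁), h.star_mul₁, one_mul]

theorem canonicalEndo_mul_fst (h : IsOrthogonalIsometryPair s₁ s₂) (y : R) :
    canonicalEndo s₁ s₂ y * s₁ = s₁ * y := by
  simp only [canonicalEndo, add_mul, mul_assoc, h.star_mul₁, h.star_mul₂₁, mul_one, mul_zero,
    add_zero]

theorem canonicalEndo_mul_snd (h : IsOrthogonalIsometryPair s₁ s₂) (y : R) :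
    canonicalEndo s₁ s₂ y * s₂ = s₂ * y := by
  simp only [canonicalEndo, add_mul, mul_assoc, h.star_mul₂, h.star_mul₁₂, mul_one, mul_zero,
    zero_add]

theorem iterate_canonicalEndo_mul_pow (h : IsOrthogonalIsometryPair s₁ s₂) (j : ℕ) (y z : R) :
    (canonicalEndo s₁ s₂)^[j] y * (s₂ ^ j * z) = s₂ ^ j * (y * z) := by
  induction j generalizing y z with
  | zero => simp
  | succ j ih =>
    rw [Function.iterate_succ_apply, pow_succ, mul_assoc, ih, ← mul_assoc (canonicalEndo _ _ y),
      h.canonicalEndo_mul_snd, mul_assoc, mul_assoc]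

theorem iterate_canonicalEndo_succ_mul (h : IsOrthogonalIsometryPair s₁ s₂) (k : ℕ) (y : R) :
    (canonicalEndo s₁ s₂)^[k + 1] y * (s₂ ^ k * s₁) = s₂ ^ k * s₁ * y := by
  rw [Function.iterate_succ_apply, h.iterate_canonicalEndo_mul_pow, h.canonicalEndo_mul_fst,
    mul_assoc]

theorem iterate_canonicalEndo_proj₁_mul (h : IsOrthogonalIsometryPair s₁ s₂) (k : ℕ) :
    (canonicalEndo s₁ s₂)^[k] (s₁ * star s₁) * (s₂ ^ k * s₁) = s₂ ^ k * s₁ := by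
  rw [h.iterate_canonicalEndo_mul_pow, mul_assoc, h.star_mul₁, mul_one]

theorem iterate_canonicalEndo_proj₂_mul (h : IsOrthogonalIsometryPair s₁ s₂) (j r : ℕ) :
    (canonicalEndo s₁ s₂)^[j] (s₂ * star s₂) * (s₂ ^ (j + (r + 1)) * s₁) =
      s₂ ^ (j + (r + 1)) * s₁ := by
  rw [pow_add, pow_succ', mul_assoc, h.iterate_canonicalEndo_mul_pow, mul_assoc s₂, mul_assoc s₂,
    ← mul_assoc (star s₂), h.star_mul₂, one_mul]

theorem iterate_canonicalEndo_smul_eq_self (h : IsOrthogonalIsometryPair s₁ s₂)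
    {M : Type*} [MulAction R M] {k : ℕ} {Ω : M} (hΩ : (s₂ ^ k * s₁) • Ω = Ω) {y : R}
    (hy : y • Ω = Ω) (m : ℕ) : (canonicalEndo s₁ s₂)^[(k + 1) * m] y • Ω = Ω := by
  induction m with
  | zero => simpa using hy
  | succ m ih =>
    calc (canonicalEndo s₁ s₂)^[(k + 1) * (m + 1)] y • Ω
        = ((canonicalEndo s₁ s₂)^[k + 1] ((canonicalEndo s₁ s₂)^[(k + 1) * m] y) *
            (s₂ ^ k * s₁)) • Ω := by
          rw [mul_smul, hΩ, mul_add, mul_one, add_comm, Function.iterate_add_apply]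
      _ = Ω := by rw [h.iterate_canonicalEndo_succ_mul, mul_smul, ih, hΩ]

end IsOrthogonalIsometryPair

end

open ContinuousLinearMap

theorem RFS_number_operators_on_GP_vector_general
    {H : Type*} [NormedAddCommGroup H] [InnerProductSpace ℂ H] [CompleteSpace H]
    (t₁ t₂ : H →L[ℂ] H)
    (h11 : adjoint t₁ * t₁ = 1) (h22 : adjoint t₂ * t₂ = 1)
    (h12 : adjoint t₁ * t₂ = 0) (h21 : adjoint t₂ * t₁ = 0)
    (p : ℕ) (hp : 2 ≤ p)
    (Ω : H) (hfix : (t₂ ^ (p - 1) * t₁) Ω = Ω)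
    (a : ℕ → H →L[ℂ] H)
    (ha1 : a 1 = t₁ * adjoint t₂)
    (harec : ∀ n : ℕ, 1 ≤ n →
      a (n + 1) = t₁ * a n * adjoint t₁ - t₂ * a n * adjoint t₂) :
    ∀ l : ℕ, 1 ≤ l →
      ((a (p * l) * adjoint (a (p * l))) Ω = Ω) ∧
      (∀ i : ℕ, 1 ≤ i → i ≤ p - 1 →
        (adjoint (a (p * (l - 1) + i)) * a (p * (l - 1) + i)) Ω = Ω) := by
  have h : IsOrthogonalIsometryPair t₁ t₂ := by
    constructor <;> simpa only [star_eq_adjoint]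
  obtain ⟨k, rfl⟩ : ∃ k, p = k + 1 := ⟨p - 1, by omega⟩
  rw [Nat.add_sub_cancel] at hfix ⊢
  have ha (n : ℕ) : a (n + 1) = (twistedEndo t₁ t₂)^[n] (t₁ * star t₂) := by
    rw [apply_succ_eq_iterate (twistedEndo t₁ t₂) (a := a) (fun n hn ↦ by
      simpa only [twistedEndo, star_eq_adjoint] using harec n hn), ha1, star_eq_adjoint]
  have hw : (t₂ ^ k * t₁) • Ω = Ω := hfix
  have hΦ {y : H →L[ℂ] H} (hy : y * (t₂ ^ k * t₁) = t₂ ^ k * t₁) (m : ℕ) :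
      ((canonicalEndo t₁ t₂)^[(k + 1) * m] y) Ω = Ω :=
    h.iterate_canonicalEndo_smul_eq_self hw (by
      nth_rewrite 1 [← hw]
      rw [← mul_smul, hy, hw]) m
  intro l hl
  obtain ⟨l, rfl⟩ : ∃ l', l = l' + 1 := ⟨l - 1, by omega⟩
  refine ⟨?_, fun i hi₁ hik ↦ ?_⟩
  · rw [show (k + 1) * (l + 1) = (k + 1) * l + k + 1 by ring, ha, ← star_eq_adjoint,
      h.iterate_twistedEndo_mul_star, Function.iterate_add_apply]
    exact hΦ (h.iterate_canonicalEndo_proj₁_mul k) l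
  · obtain ⟨j, r, rfl, rfl⟩ : ∃ j r, i = j + 1 ∧ k = j + (r + 1) :=
      ⟨i - 1, k - i, by omega, by omega⟩
    rw [Nat.add_sub_cancel, ← add_assoc, ha, ← star_eq_adjoint, h.star_iterate_twistedEndo_mul,
      Function.iterate_add_apply]
    exact hΦ (h.iterate_canonicalEndo_proj₂_mul j r) l

/-- For the GP vector `Ω` of `P₂(2^{p-1}1)` and the recursive fermion system:
`a_{pl} a_{pl}* Ω = Ω` and `a_{p(l-1)+i}* a_{p(l-1)+i} Ω = Ω` for `1 ≤ i ≤ p-1`. -/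
theorem RFS_number_operators_on_GP_vector
    {H : Type*} [NormedAddCommGroup H] [InnerProductSpace ℂ H] [CompleteSpace H]
    (t₁ t₂ : H →L[ℂ] H)
    (h11 : adjoint t₁ * t₁ = 1) (h22 : adjoint t₂ * t₂ = 1)
    (h12 : adjoint t₁ * t₂ = 0) (h21 : adjoint t₂ * t₁ = 0)
    (hsum : t₁ * adjoint t₁ + t₂ * adjoint t₂ = 1)
    (p : ℕ) (hp : 2 ≤ p)
    (Ω : H) (hfix : (t₂ ^ (p - 1) * t₁) Ω = Ω)
    (a : ℕ → H →L[ℂ] H)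
    (ha1 : a 1 = t₁ * adjoint t₂)
    (harec : ∀ n : ℕ, 1 ≤ n →
      a (n + 1) = t₁ * a n * adjoint t₁ - t₂ * a n * adjoint t₂) :
    ∀ l : ℕ, 1 ≤ l →
      ((a (p * l) * adjoint (a (p * l))) Ω = Ω) ∧
      (∀ i : ℕ, 1 ≤ i → i ≤ p - 1 →
        (adjoint (a (p * (l - 1) + i)) * a (p * (l - 1) + i)) Ω = Ω) :=
  RFS_number_operators_on_GP_vector_general t₁ t₂ h11 h22 h12 h21 p hp Ω hfix a ha1 harec
end

section
/- Let A be a unital *-algebra generated by t₁, t₂ with the Cuntz O₂ relations, and let α be the *-automorphism with α(t₁) = t₂ and α(t₂) = t₁. Let (a_n) be the recursive fermion system a₁ = t₁t₂*, a_n = ζ(a_{n−1}) with ζ(y) = t₁yt₁* − t₂yt₂*. Then α ∘ ζ = −ζ ∘ α, and consequently α(a_n) = (−1)^{n−1} a_n* for every n ≥ 1. -/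
/-- The flip automorphism `α` of `O₂` (exchanging `t₁` and `t₂`) anticommutes
with the map `ζ(y) = t₁ y t₁* - t₂ y t₂*`, and consequently sends the recursive
fermion system to `α(aₙ) = (-1)^{n-1} aₙ*`. -/
theorem flip_automorphism_on_RFS
    {A : Type*} [Ring A] [StarRing A]
    (t₁ t₂ : A)
    (h11 : star t₁ * t₁ = 1) (h22 : star t₂ * t₂ = 1)
    (h12 : star t₁ * t₂ = 0) (h21 : star t₂ * t₁ = 0)
    (hsum : t₁ * star t₁ + t₂ * star t₂ = 1)
    (α : A ≃+* A)
    (hαstar : ∀ x : A, α (star x) = star (α x))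
    (hα1 : α t₁ = t₂) (hα2 : α t₂ = t₁)
    (a : ℕ → A)
    (ha1 : a 1 = t₁ * star t₂)
    (harec : ∀ n : ℕ, 1 ≤ n →
      a (n + 1) = t₁ * a n * star t₁ - t₂ * a n * star t₂) :
    (∀ y : A,
      α (t₁ * y * star t₁ - t₂ * y * star t₂) =
        -(t₁ * α y * star t₁ - t₂ * α y * star t₂)) ∧
    (∀ n : ℕ, 1 ≤ n → α (a n) = (-1 : A) ^ (n - 1) * star (a n)) := by
  have hζ : ∀ y : A,
      α (t₁ * y * star t₁ - t₂ * y * star t₂) =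
        -(t₁ * α y * star t₁ - t₂ * α y * star t₂) := by
    intro y
    have hs1 : α (star t₁) = star t₂ := by rw [hαstar, hα1]
    have hs2 : α (star t₂) = star t₁ := by rw [hαstar, hα2]
    simp only [map_sub, map_mul, hα1, hα2, hs1, hs2]
    abel
  refine ⟨hζ, ?_⟩
  intro n hn
  induction n with
  | zero => omega
  | succ n ih =>
    rcases Nat.eq_or_lt_of_le hn with h | h
    · have : n = 0 := by omega
      subst this
      have hs2 : α (star t₂) = star t₁ := by rw [hαstar, hα2]
      simp [ha1, hα1, hs2, star_mul]
    · have hn1 : 1 ≤ n := by omega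
      have ihn := ih hn1
      rw [harec n hn1, hζ, ihn]
      have hidx : n + 1 - 1 = (n - 1) + 1 := by omega
      rw [hidx, pow_succ]
      have hc1 : Commute ((-1:A)^(n-1)) t₁ := (Commute.neg_one_left t₁).pow_left _
      have hc2 : Commute ((-1:A)^(n-1)) t₂ := (Commute.neg_one_left t₂).pow_left _
      rw [show t₁ * ((-1:A)^(n-1) * star (a n)) = (-1:A)^(n-1) * (t₁ * star (a n)) from by
        rw [← mul_assoc, ← hc1.eq, mul_assoc]]
      rw [show t₂ * ((-1:A)^(n-1) * star (a n)) = (-1:A)^(n-1) * (t₂ * star (a n)) from by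
        rw [← mul_assoc, ← hc2.eq, mul_assoc]]
      simp only [star_sub, star_mul, star_star]
      noncomm_ring
end

section
/- Let H = l²(ℕ) with basis (e_n), and define the densely defined operator B on the finitely supported vectors by B e_{2^{m}(2n−1)} = √m · e_{2^{m−1}(2n−1)} for m ≥ 1, n ≥ 1, and B e_{2n−1} = 0 for n ≥ 1. Then its formal adjoint B* acts by B* e_{2^{m−1}(2n−1)} = √m · e_{2^{m}(2n−1)}, and on finitely supported vectors the canonical commutation relation B B* − B* B = I holds. -/
/-!
With `ν` the 2-adic valuation, the hypotheses on `B` say uniformly that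
`B e_k = √(ν k) e_{k/2}` for every `k ≥ 1`, the weight vanishing exactly at odd `k`.
Pairing with basis vectors then gives `B* e_k = √(ν k + 1) e_{2k}`, so that
`B B* e_k = (ν k + 1) e_k` and `B* B e_k = ν k e_k`, whose difference is `e_k`.
-/

noncomputable def fsBasis (n : ℕ) : ℕ →₀ ℂ := Finsupp.single (n - 1) 1

noncomputable def fsInner (x y : ℕ →₀ ℂ) : ℂ :=
  x.sum fun i c => (starRingEnd ℂ) c * y i

open Finsupp ComplexConjugate

lemma fsBasis_succ (j : ℕ) : fsBasis (j + 1) = single j 1 := by simp [fsBasis]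

lemma fsBasis_apply (k j : ℕ) : fsBasis k j = if k - 1 = j then 1 else 0 :=
  single_apply

lemma fsInner_fsBasis_left (k : ℕ) (y : ℕ →₀ ℂ) : fsInner (fsBasis k) y = y (k - 1) := by
  simp [fsInner, fsBasis, sum_single_index]

lemma fsInner_fsBasis_right (x : ℕ →₀ ℂ) (k : ℕ) : fsInner x (fsBasis k) = conj (x (k - 1)) := by
  rw [fsInner, Finsupp.sum, Finset.sum_eq_single (k - 1)]
  · simp [fsBasis]
  · intro j _ hj
    simp [fsBasis_apply, Ne.symm hj]
  · intro hk
    simp [notMem_support_iff.mp hk]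

lemma fsInner_smul_right (c : ℂ) (x y : ℕ →₀ ℂ) : fsInner x (c • y) = c * fsInner x y := by
  simp only [fsInner, mul_sum, Finsupp.smul_apply, smul_eq_mul, mul_left_comm]

lemma apply_eq_conj_fsInner_of_adjoint {A A' : (ℕ →₀ ℂ) →ₗ[ℂ] (ℕ →₀ ℂ)}
    (hadj : ∀ x y, fsInner (A' x) y = fsInner x (A y)) (x : ℕ →₀ ℂ) (k : ℕ) :
    A' x (k - 1) = conj (fsInner x (A (fsBasis k))) := by
  rw [← hadj, fsInner_fsBasis_right, Complex.conj_conj]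

lemma padicValNat_two_mul {k : ℕ} (hk : k ≠ 0) : padicValNat 2 (2 * k) = padicValNat 2 k + 1 := by
  rw [padicValNat.mul two_ne_zero hk, padicValNat_self, add_comm]

lemma padicValNat_two_pow_mul_odd (m : ℕ) {o : ℕ} (ho : Odd o) : padicValNat 2 (2 ^ m * o) = m := by
  rw [padicValNat.mul (by positivity) ho.pos.ne', padicValNat.prime_pow,
    padicValNat.eq_zero_of_not_dvd ho.not_two_dvd_nat, add_zero]

section
variable {B Bs : (ℕ →₀ ℂ) →ₗ[ℂ] (ℕ →₀ ℂ)}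

lemma apply_fsBasis_eq_sqrt_padicValNat
    (hB : ∀ m n : ℕ, 1 ≤ m → 1 ≤ n →
      B (fsBasis (2 ^ m * (2 * n - 1))) =
        ((Real.sqrt m : ℝ) : ℂ) • fsBasis (2 ^ (m - 1) * (2 * n - 1)))
    (hB0 : ∀ n : ℕ, 1 ≤ n → B (fsBasis (2 * n - 1)) = 0) {k : ℕ} (hk : 1 ≤ k) :
    B (fsBasis k) = ((√(padicValNat 2 k) : ℝ) : ℂ) • fsBasis (k / 2) := by
  obtain ⟨m, o, ho, rfl⟩ := Nat.exists_eq_two_pow_mul_odd (n := k) (by omega)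
  obtain ⟨n, rfl⟩ := ho
  have hodd : 2 * n + 1 = 2 * (n + 1) - 1 := by omega
  rw [padicValNat_two_pow_mul_odd m ⟨n, rfl⟩, hodd]
  rcases Nat.eq_zero_or_pos m with rfl | hm
  · simp [hB0 (n + 1) (by omega)]
  · rw [hB m (n + 1) hm (by omega)]
    congr 2
    rw [← Nat.mul_div_cancel_left (2 ^ (m - 1) * _) two_pos, ← mul_assoc, ← pow_succ',
      Nat.sub_add_cancel hm]

lemma adjoint_apply_fsBasis
    (hBν : ∀ k, 1 ≤ k → B (fsBasis k) = ((√(padicValNat 2 k) : ℝ) : ℂ) • fsBasis (k / 2))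
    (hadj : ∀ x y : ℕ →₀ ℂ, fsInner (Bs x) y = fsInner x (B y)) {k : ℕ} (hk : 1 ≤ k) :
    Bs (fsBasis k) = ((√((padicValNat 2 k + 1 : ℕ) : ℝ)) : ℂ) • fsBasis (2 * k) := by
  ext j
  have hcoeff := apply_eq_conj_fsInner_of_adjoint hadj (fsBasis k) (j + 1)
  rw [Nat.add_sub_cancel] at hcoeff
  rw [hcoeff, hBν (j + 1) (by omega), fsInner_smul_right, fsInner_fsBasis_left,
    Finsupp.smul_apply, fsBasis_apply, fsBasis_apply, map_mul, Complex.conj_ofReal]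
  by_cases hj : j + 1 = 2 * k
  · rw [hj, padicValNat_two_mul (by omega), Nat.mul_div_cancel_left _ two_pos, if_pos rfl,
      if_pos (by omega)]
    simp
  · rw [if_neg (show 2 * k - 1 ≠ j by omega)]
    by_cases hhalf : (j + 1) / 2 - 1 = k - 1
    · rw [padicValNat.eq_zero_of_not_dvd (show ¬ 2 ∣ j + 1 by omega)]
      simp
    · simp [hhalf]

lemma commutator_apply_fsBasis
    (hBν : ∀ k, 1 ≤ k → B (fsBasis k) = ((√(padicValNat 2 k) : ℝ) : ℂ) • fsBasis (k / 2))
    (hBsν : ∀ k, 1 ≤ k →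
      Bs (fsBasis k) = ((√((padicValNat 2 k + 1 : ℕ) : ℝ)) : ℂ) • fsBasis (2 * k))
    {k : ℕ} (hk : 1 ≤ k) :
    B (Bs (fsBasis k)) - Bs (B (fsBasis k)) = fsBasis k := by
  have raise_lower : B (Bs (fsBasis k)) = ((padicValNat 2 k + 1 : ℕ) : ℂ) • fsBasis k := by
    rw [hBsν k hk, map_smul, hBν (2 * k) (by omega), smul_smul, padicValNat_two_mul (by omega),
      Nat.mul_div_cancel_left _ two_pos, ← Complex.ofReal_mul,
      Real.mul_self_sqrt (Nat.cast_nonneg _), Complex.ofReal_natCast]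
  have lower_raise : Bs (B (fsBasis k)) = (padicValNat 2 k : ℂ) • fsBasis k := by
    rw [hBν k hk, map_smul]
    rcases Nat.eq_zero_or_pos (padicValNat 2 k) with h0 | hpos
    · simp [h0]
    · have h2 : 2 ∣ k := dvd_of_one_le_padicValNat hpos
      rw [hBsν (k / 2) (by omega), smul_smul, Nat.mul_div_cancel' h2, padicValNat.div h2,
        Nat.sub_add_cancel hpos, ← Complex.ofReal_mul, Real.mul_self_sqrt (Nat.cast_nonneg _),
        Complex.ofReal_natCast]
  rw [raise_lower, lower_raise, ← sub_smul]
  push_cast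
  simp

end

lemma fsBasis_ext {M : Type*} [AddCommMonoid M] [Module ℂ M] ⦃φ ψ : (ℕ →₀ ℂ) →ₗ[ℂ] M⦄
    (h : ∀ k, 1 ≤ k → φ (fsBasis k) = ψ (fsBasis k)) : φ = ψ :=
  lhom_ext fun a c => by
    rw [← smul_single_one, map_smul, map_smul, ← fsBasis_succ, h (a + 1) (by omega)]

/-- The boson annihilation operator `B e_{2^m(2n-1)} = √m e_{2^{m-1}(2n-1)}`,
`B e_{2n-1} = 0` on finitely supported vectors: its formal adjoint acts by
`B* e_{2^{m-1}(2n-1)} = √m e_{2^m(2n-1)}` and `B B* - B* B = I`. -/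
theorem recursive_boson_weighted_shift
    (B Bs : (ℕ →₀ ℂ) →ₗ[ℂ] (ℕ →₀ ℂ))
    (hB : ∀ m n : ℕ, 1 ≤ m → 1 ≤ n →
      B (fsBasis (2 ^ m * (2 * n - 1))) =
        ((Real.sqrt m : ℝ) : ℂ) • fsBasis (2 ^ (m - 1) * (2 * n - 1)))
    (hB0 : ∀ n : ℕ, 1 ≤ n → B (fsBasis (2 * n - 1)) = 0)
    (hadj : ∀ x y : ℕ →₀ ℂ, fsInner (Bs x) y = fsInner x (B y)) :
    (∀ m n : ℕ, 1 ≤ m → 1 ≤ n →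
      Bs (fsBasis (2 ^ (m - 1) * (2 * n - 1))) =
        ((Real.sqrt m : ℝ) : ℂ) • fsBasis (2 ^ m * (2 * n - 1))) ∧
    (∀ x : ℕ →₀ ℂ, B (Bs x) - Bs (B x) = x) := by
  have hBν k (hk : 1 ≤ k) := apply_fsBasis_eq_sqrt_padicValNat hB hB0 hk
  have hBsν k (hk : 1 ≤ k) := adjoint_apply_fsBasis hBν hadj hk
  refine ⟨fun m n hm hn => ?_, fun x => ?_⟩
  · have hodd : Odd (2 * n - 1) := ⟨n - 1, by omega⟩
    rw [hBsν _ (Nat.mul_pos (by positivity) hodd.pos), padicValNat_two_pow_mul_odd _ hodd,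
      Nat.sub_add_cancel hm, ← mul_assoc, ← pow_succ', Nat.sub_add_cancel hm]
  · have hccr : B ∘ₗ Bs - Bs ∘ₗ B = LinearMap.id :=
      fsBasis_ext fun k hk => commutator_apply_fsBasis hBν hBsν hk
    exact LinearMap.congr_fun hccr x
end

section
/- Let t₁, t₂ be isometries on a Hilbert space with the Cuntz O₂ relations and Ω a unit vector with t₁Ω = Ω. Let (a_n) be the recursive fermion system. Then for all integers n ≥ 1, m ≥ 0: t₁^{n−1} t₂^{m+1} Ω = a_n* a_{n+1}* ⋯ a_{n+m}* Ω. -/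
open ContinuousLinearMap

/-- The single-block boson–fermion correspondence on the Fock vacuum:
`t₁^{n-1} t₂^{m+1} Ω = aₙ* a_{n+1}* ⋯ a_{n+m}* Ω` for `n ≥ 1`, `m ≥ 0`. -/
theorem single_block_boson_fermion_correspondence
    {H : Type*} [NormedAddCommGroup H] [InnerProductSpace ℂ H] [CompleteSpace H]
    (t₁ t₂ : H →L[ℂ] H)
    (h11 : adjoint t₁ * t₁ = 1) (h22 : adjoint t₂ * t₂ = 1)
    (h12 : adjoint t₁ * t₂ = 0) (h21 : adjoint t₂ * t₁ = 0)
    (hsum : t₁ * adjoint t₁ + t₂ * adjoint t₂ = 1)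
    (Ω : H) (hΩ : ‖Ω‖ = 1) (hfix : t₁ Ω = Ω)
    (a : ℕ → H →L[ℂ] H)
    (ha1 : a 1 = t₁ * adjoint t₂)
    (harec : ∀ k : ℕ, 1 ≤ k →
      a (k + 1) = t₁ * a k * adjoint t₁ - t₂ * a k * adjoint t₂) :
    ∀ n m : ℕ, 1 ≤ n →
      (t₁ ^ (n - 1) * t₂ ^ (m + 1)) Ω =
        (List.ofFn fun i : Fin (m + 1) => adjoint (a (n + i.val))).prod Ω := by
  have hΩ1 : adjoint t₁ Ω = Ω := by
    conv_lhs => rw [← hfix]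
    have := congrArg (fun f : H →L[ℂ] H => f Ω) h11
    simpa [mul_apply] using this
  have hA1 : adjoint (a 1) = t₂ * adjoint t₁ := by
    rw [ha1, mul_def, adjoint_comp, adjoint_adjoint, ← mul_def]
  have hArec : ∀ k, 1 ≤ k → adjoint (a (k + 1)) =
      t₁ * adjoint (a k) * adjoint t₁ - t₂ * adjoint (a k) * adjoint t₂ := by
    intro k hk
    rw [harec k hk]
    simp only [mul_def, map_sub, adjoint_comp, adjoint_adjoint]
    simp only [← mul_def, mul_assoc]
  have L1 : ∀ k, 1 ≤ k → adjoint (a (k + 1)) * t₁ = t₁ * adjoint (a k) := by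
    intro k hk
    rw [hArec k hk]
    simp [sub_mul, mul_assoc, h11, h21]
  have L2 : ∀ n : ℕ, adjoint (a (n + 1)) * t₁ ^ (n + 1) = t₁ ^ n * t₂ := by
    intro n
    induction n with
    | zero => simp [hA1, mul_assoc, h11]
    | succ n ih =>
        have hp : t₁ ^ (n + 2) = t₁ * t₁ ^ (n + 1) := by
          rw [← pow_succ']
        rw [hp, ← mul_assoc, L1 (n + 1) (by omega), mul_assoc, ih, ← mul_assoc,
          ← pow_succ']
  have L3 : ∀ n : ℕ, adjoint (a (n + 1)) Ω = (t₁ ^ n * t₂) Ω := by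
    intro n
    induction n with
    | zero => simp [hA1, mul_apply, hΩ1]
    | succ n ih =>
        calc adjoint (a (n + 2)) Ω = adjoint (a (n + 2)) (t₁ Ω) := by rw [hfix]
          _ = (adjoint (a (n + 2)) * t₁) Ω := rfl
          _ = (t₁ * adjoint (a (n + 1))) Ω := by rw [L1 (n + 1) (by omega)]
          _ = t₁ (adjoint (a (n + 1)) Ω) := rfl
          _ = t₁ ((t₁ ^ n * t₂) Ω) := by rw [ih]
          _ = (t₁ * (t₁ ^ n * t₂)) Ω := rfl
          _ = (t₁ ^ (n + 1) * t₂) Ω := by rw [← mul_assoc, ← pow_succ']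
  intro n m hn
  obtain ⟨n', rfl⟩ : ∃ n', n = n' + 1 := ⟨n - 1, by omega⟩
  simp only [Nat.add_sub_cancel]
  clear hn
  induction m generalizing n' with
  | zero =>
      simp only [List.ofFn_succ, List.ofFn_zero, List.prod_cons, List.prod_nil, mul_one,
        Fin.val_zero, Nat.add_zero, pow_one]
      exact (L3 n').symm
  | succ m ih =>
      rw [List.ofFn_succ, List.prod_cons]
      simp only [Fin.val_succ, Fin.val_zero, Nat.add_zero]
      have hfun : (fun i : Fin (m + 1) => adjoint (a (n' + 1 + (i.val + 1))))
          = fun i : Fin (m + 1) => adjoint (a (n' + 1 + 1 + i.val)) := by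
        funext i; congr 2; omega
      rw [hfun]
      calc (t₁ ^ n' * t₂ ^ (m + 1 + 1)) Ω
          = (adjoint (a (n' + 1)) * (t₁ ^ (n' + 1) * t₂ ^ (m + 1))) Ω := by
            conv_rhs => rw [← mul_assoc, L2 n', mul_assoc, ← pow_succ']
        _ = adjoint (a (n' + 1)) ((t₁ ^ (n' + 1) * t₂ ^ (m + 1)) Ω) := rfl
        _ = adjoint (a (n' + 1))
              ((List.ofFn fun i : Fin (m + 1) =>
                adjoint (a (n' + 1 + 1 + i.val))).prod Ω) := by
            rw [ih (n' + 1)]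
        _ = (adjoint (a (n' + 1)) *
              (List.ofFn fun i : Fin (m + 1) =>
                adjoint (a (n' + 1 + 1 + i.val))).prod) Ω := rfl
end
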